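/- Let k be a field of characteristic 0 and n ≥ 2 an integer, and let A = kQ/(p₂p₁) be the gentle algebra of the cylinder dissection together with the bilinear map μ̃ determined by μ̃(p₂,p₁) = q̄. Then μ̃ is not a Hochschild 2-coboundary: there is no k-linear map f : A → A such that μ̃(a,b) = a·f(b) − f(a·b) + f(a)·b for all a,b ∈ A. -/

import Mathlib

/-!
`CylIdx n` indexes the `k`-basis of the gentle algebra `A = kQ/(p₂p₁)` of the cylinder
dissection: the quiver `Q` has vertices `u₀, …, u_{n-1}, v` (encoded as `0, …, n-1, n`),
arrows `q_i : u_{i-1} → u_i` for `1 ≤ i ≤ n-1`, `p₁ : u₀ → v` and `p₂ : v → u_{n-1}`.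
The basis of `A` consists of the trivial paths `e x`, the arrows `p₁`, `p₂`, and the
paths `q i j = q_j ⋯ q_i` for `1 ≤ i ≤ j ≤ n-1`.
-/
inductive CylIdx (n : ℕ) : Type
  | e : (x : ℕ) → x ≤ n → CylIdx n
  | p1 : CylIdx n
  | p2 : CylIdx n
  | q : (i j : ℕ) → 1 ≤ i → i ≤ j → j ≤ n - 1 → CylIdx n

namespace CylIdx

/-- Source vertex of a basis path (vertex `u_x` is encoded `x`, the vertex `v` as `n`). -/
def src {n : ℕ} : CylIdx n → ℕ
  | e x _ => x
  | p1 => 0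
  | p2 => n
  | q i _ _ _ _ => i - 1

/-- Target vertex of a basis path. -/
def tgt {n : ℕ} : CylIdx n → ℕ
  | e x _ => x
  | p1 => n
  | p2 => n - 1
  | q _ j _ _ _ => j

end CylIdx

/-- Structure constants of `A = kQ/(p₂p₁)`: the product `b · a` of two basis paths is a
basis path (the concatenation) or zero; note `p₂ · p₁ = 0` is the gentle relation. -/
def cylMul {n : ℕ} : CylIdx n → CylIdx n → Option (CylIdx n)
  | .e x _, a => if x = a.tgt then some a else none
  | b, .e x _ => if b.src = x then some b else none
  | .q i' j' _ h2 h3, .q i j g1 g2 _ =>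
      if h : i' = j + 1 then some (.q i j' g1 (by omega) h3) else none
  | _, _ => none

/-!
Apply the coboundary equation to `(p₂, p₁)`. Since `p₂ p₁ = 0` it reads
`q̄ = p₂ · f(p₁) + f(p₂) · p₁`. But left multiplication by `p₂` only produces multiples of
`p₂`, and right multiplication by `p₁` only multiples of `p₁`, so the right-hand side has
`q̄`-coordinate `0`, while the left-hand side has `q̄`-coordinate `1`.
-/

namespace Module.Basis

variable {ι R A : Type*} [CommSemiring R] [Semiring A] [Algebra R A] (B : Basis ι R A)

theorem repr_mul_left_apply_eq_zero {x : A} {i : ι} (h : ∀ a, B.repr (x * B a) i = 0)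
    (v : A) : B.repr (x * v) i = 0 :=
  LinearMap.congr_fun
    (B.ext (f₁ := Finsupp.lapply i ∘ₗ B.repr.toLinearMap ∘ₗ LinearMap.mulLeft R x) (f₂ := 0) h) v

theorem repr_mul_right_apply_eq_zero {y : A} {i : ι} (h : ∀ a, B.repr (B a * y) i = 0)
    (v : A) : B.repr (v * y) i = 0 :=
  LinearMap.congr_fun
    (B.ext (f₁ := Finsupp.lapply i ∘ₗ B.repr.toLinearMap ∘ₗ LinearMap.mulRight R y) (f₂ := 0) h) v

theorem repr_elim_zero_apply_of_ne {o : Option ι} {i : ι} (h : o ≠ some i) :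
    B.repr (o.elim 0 B) i = 0 := by
  cases o with
  | none => simp
  | some c =>
    have hc : c ≠ i := fun hc => h (congrArg some hc)
    simp [hc]

end Module.Basis

namespace CylIdx

variable {n : ℕ}

theorem eq_p2_of_cylMul_p2_left {a c : CylIdx n} (h : cylMul .p2 a = some c) : c = .p2 := by
  cases a <;> grind [cylMul]

theorem eq_p1_of_cylMul_p1_right {b c : CylIdx n} (h : cylMul b .p1 = some c) : c = .p1 := by
  cases b <;> grind [cylMul]

end CylIdx

/-- **μ̃ is not a Hochschild 2-coboundary** of the gentle algebra `A = kQ/(p₂p₁)` of the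
cylinder dissection. -/
theorem cylinder_mu_not_coboundary
    (k : Type*) [Field k]
    (n : ℕ) (hn : 2 ≤ n)
    (A : Type*) [Ring A] [Algebra k A]
    (B : Module.Basis (CylIdx n) k A)
    (hmul : ∀ b a : CylIdx n, B b * B a = (cylMul b a).elim 0 B)
    (μ : A →ₗ[k] A →ₗ[k] A)
    (hμ1 : μ (B .p2) (B .p1) = B (.q 1 (n - 1) le_rfl (by omega) le_rfl)) :
    ¬ ∃ f : A →ₗ[k] A, ∀ a b : A, μ a b = a * f b - f (a * b) + f a * b := by
  rintro ⟨f, hf⟩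
  set qbar : CylIdx n := .q 1 (n - 1) le_rfl (by omega) le_rfl
  have hleft (v : A) : B.repr (B .p2 * v) qbar = 0 :=
    B.repr_mul_left_apply_eq_zero (fun a => by
      rw [hmul]
      exact B.repr_elim_zero_apply_of_ne fun h =>
        nomatch (CylIdx.eq_p2_of_cylMul_p2_left h).symm) v
  have hright (v : A) : B.repr (v * B .p1) qbar = 0 :=
    B.repr_mul_right_apply_eq_zero (fun b => by
      rw [hmul]
      exact B.repr_elim_zero_apply_of_ne fun h =>
        nomatch (CylIdx.eq_p1_of_cylMul_p1_right h).symm) v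
  have hp2p1 : B .p2 * B .p1 = 0 := by rw [hmul]; rfl
  have h := congrArg (fun v => B.repr v qbar) (hf (B .p2) (B .p1))
  simp only [hμ1, hp2p1, map_zero, sub_zero, map_add, Finsupp.add_apply, hleft, hright,
    B.repr_self, Finsupp.single_eq_same, add_zero] at h
  exact one_ne_zero h
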